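/- arXiv:1308.0425 — 3 statements merged into one kernel-verified Lean document; each statement's English description precedes it below -/
import Mathlib

section
/- If n ≥ 2 and K : ℝⁿ → ℝ is a bounded C¹ function with bounded gradient, then for every ξ ∈ ℝⁿ the following equivalence holds: ∇K(ξ) = 0 if and only if the full gradient of Γ (in the n+1 variables (μ, ξ)) vanishes at (0, ξ). -/
open MeasureTheory
open scoped RealInnerProductSpace

noncomputable def z0 (n : ℕ) (γ α : ℝ) (y : EuclideanSpace ℝ (Fin n)) : ℝ :=
  α * (1 + ‖y‖ ^ 2) ^ (-(((n : ℝ) - 2 * γ) / 2))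

noncomputable def Gam (n : ℕ) (γ α p : ℝ) (K : EuclideanSpace ℝ (Fin n) → ℝ)
    (μ : ℝ) (ξ : EuclideanSpace ℝ (Fin n)) : ℝ :=
  (1 / (p + 1)) * ∫ y, K (μ • y + ξ) * z0 n γ α y ^ (p + 1)

/-!
Differentiating under the integral sign, with the dominating function `C (1 + |y|) z₀(y)^{p+1}`
(integrable since `z₀^{p+1} ~ |y|^{-2n}` and `n ≥ 2`), gives
`DΓ(0, ξ)(h, v) = (1/(p+1)) ∫ z₀(y)^{p+1} DK(ξ)(h y + v) dy`, which vanishes when `DK(ξ) = 0`.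
Conversely `Γ(0, ·) = c₀ K` with `c₀ > 0`, so restricting `DΓ(0, ξ)` to the `ξ`-directions
gives back `c₀ DK(ξ)`.
-/

open Module ContinuousLinearMap

section Weight

variable {E : Type*} [NormedAddCommGroup E] [NormedSpace ℝ E] [FiniteDimensional ℝ E]
  [MeasurableSpace E] [BorelSpace E] {μ : Measure E} [μ.IsAddHaarMeasure]

theorem one_add_le_two_mul_sqrt_one_add_sq (t : ℝ) : 1 + t ≤ 2 * √(1 + t ^ 2) := by
  have h1 : 1 ≤ √(1 + t ^ 2) := Real.le_sqrt_of_sq_le (by nlinarith)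
  have h2 : t ≤ √(1 + t ^ 2) := Real.le_sqrt_of_sq_le (by linarith)
  linarith

theorem integrable_one_add_norm_mul_rpow_neg_one_add_norm_sq {r : ℝ}
    (hr : (finrank ℝ E : ℝ) + 1 < r) :
    Integrable (fun x : E => (1 + ‖x‖) * (1 + ‖x‖ ^ 2) ^ (-r / 2)) μ := by
  refine ((integrable_rpow_neg_one_add_norm_sq (μ := μ) (r := r - 1) (by linarith)).const_mul 2).mono'
    (by fun_prop) (Filter.Eventually.of_forall fun x => ?_)
  have hb : 0 < 1 + ‖x‖ ^ 2 := by positivity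
  rw [Real.norm_of_nonneg (by positivity),
    show -(r - 1) / 2 = 1 / 2 + -r / 2 by ring, Real.rpow_add hb, ← Real.sqrt_eq_rpow, ← mul_assoc]
  gcongr
  exact one_add_le_two_mul_sqrt_one_add_sq ‖x‖

end Weight

section Bubble

variable {n : ℕ} {γ α p : ℝ}

theorem exponent_add_one_eq (hγn : γ < (n : ℝ) / 2)
    (hp : p = ((n : ℝ) + 2 * γ) / ((n : ℝ) - 2 * γ)) :
    p + 1 = 2 * n / ((n : ℝ) - 2 * γ) := by
  have : (n : ℝ) - 2 * γ ≠ 0 := by linarith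
  rw [hp]
  field_simp
  ring

theorem exponent_add_one_pos (hn : 1 ≤ n) (hγn : γ < (n : ℝ) / 2)
    (hp : p = ((n : ℝ) + 2 * γ) / ((n : ℝ) - 2 * γ)) : 0 < p + 1 := by
  have : (1 : ℝ) ≤ n := by exact_mod_cast hn
  rw [exponent_add_one_eq hγn hp]
  exact div_pos (by linarith) (by linarith)

theorem z0_rpow_eq (hγn : γ < (n : ℝ) / 2) (hp : p = ((n : ℝ) + 2 * γ) / ((n : ℝ) - 2 * γ))
    (hα : 0 < α) (y : EuclideanSpace ℝ (Fin n)) :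
    z0 n γ α y ^ (p + 1) = α ^ (p + 1) * (1 + ‖y‖ ^ 2) ^ (-(2 * n : ℝ) / 2) := by
  have hb : 0 < 1 + ‖y‖ ^ 2 := by positivity
  have hd : (n : ℝ) - 2 * γ ≠ 0 := by linarith
  rw [z0, Real.mul_rpow hα.le (Real.rpow_nonneg hb.le _), ← Real.rpow_mul hb.le,
    exponent_add_one_eq hγn hp]
  congr 2
  field_simp

theorem z0_rpow_pos (hα : 0 < α) (y : EuclideanSpace ℝ (Fin n)) : 0 < z0 n γ α y ^ (p + 1) := by
  unfold z0
  positivity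

theorem integrable_z0_rpow (hn : 1 ≤ n) (hγn : γ < (n : ℝ) / 2)
    (hp : p = ((n : ℝ) + 2 * γ) / ((n : ℝ) - 2 * γ)) (hα : 0 < α) :
    Integrable fun y : EuclideanSpace ℝ (Fin n) => z0 n γ α y ^ (p + 1) := by
  have hn' : (1 : ℝ) ≤ n := by exact_mod_cast hn
  simp_rw [z0_rpow_eq hγn hp hα]
  exact (integrable_rpow_neg_one_add_norm_sq (by simp; linarith)).const_mul _

theorem integrable_one_add_norm_mul_z0_rpow (hn : 2 ≤ n) (hγn : γ < (n : ℝ) / 2)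
    (hp : p = ((n : ℝ) + 2 * γ) / ((n : ℝ) - 2 * γ)) (hα : 0 < α) :
    Integrable fun y : EuclideanSpace ℝ (Fin n) => (1 + ‖y‖) * z0 n γ α y ^ (p + 1) := by
  have hn' : (2 : ℝ) ≤ n := by exact_mod_cast hn
  simp_rw [z0_rpow_eq hγn hp hα, mul_left_comm _ (α ^ (p + 1))]
  exact (integrable_one_add_norm_mul_rpow_neg_one_add_norm_sq (by simp; linarith)).const_mul _

theorem integral_z0_rpow_pos (hn : 1 ≤ n) (hγn : γ < (n : ℝ) / 2)
    (hp : p = ((n : ℝ) + 2 * γ) / ((n : ℝ) - 2 * γ)) (hα : 0 < α) :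
    0 < ∫ y : EuclideanSpace ℝ (Fin n), z0 n γ α y ^ (p + 1) := by
  rw [integral_pos_iff_support_of_nonneg (fun y => (z0_rpow_pos hα y).le)
    (integrable_z0_rpow hn hγn hp hα)]
  have : Function.support (fun y : EuclideanSpace ℝ (Fin n) => z0 n γ α y ^ (p + 1)) = Set.univ :=
    Set.eq_univ_of_forall fun y => (z0_rpow_pos hα y).ne'
  rw [this]
  exact Measure.measure_univ_pos.mpr (NeZero.ne _)

end Bubble

section DilationTranslation

variable {E : Type*} [NormedAddCommGroup E] [NormedSpace ℝ E]

theorem hasFDerivAt_smul_add (y : E) (q : ℝ × E) :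
    HasFDerivAt (fun q : ℝ × E => q.1 • y + q.2)
      ((fst ℝ ℝ E).smulRight y + snd ℝ ℝ E) q :=
  (hasFDerivAt_fst.smul_const y).add hasFDerivAt_snd

theorem norm_fst_smulRight_add_snd_le (y : E) :
    ‖(fst ℝ ℝ E).smulRight y + snd ℝ ℝ E‖ ≤ 1 + ‖y‖ := by
  calc _ ≤ ‖(fst ℝ ℝ E).smulRight y‖ + ‖snd ℝ ℝ E‖ := norm_add_le _ _
    _ ≤ 1 * ‖y‖ + 1 := by
        rw [norm_smulRight_apply]
        gcongr
        exacts [norm_fst_le .., norm_snd_le ..]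
    _ = 1 + ‖y‖ := by ring

variable [MeasurableSpace E] [OpensMeasurableSpace E] [SecondCountableTopology E] {ν : Measure E}

theorem hasFDerivAt_integral_comp_smul_add {K g : E → ℝ} {C : ℝ} (hK : ContDiff ℝ 1 K)
    (hK' : ∀ x, ‖fderiv ℝ K x‖ ≤ C) (hg : AEStronglyMeasurable g ν)
    (hg₁ : Integrable (fun y => (1 + ‖y‖) * g y) ν) {μ : ℝ} {ξ : E}
    (hint : Integrable (fun y => K (μ • y + ξ) * g y) ν) :
    HasFDerivAt (fun q : ℝ × E => ∫ y, K (q.1 • y + q.2) * g y ∂ν)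
      (∫ y, g y • (fderiv ℝ K (μ • y + ξ)).comp ((fst ℝ ℝ E).smulRight y + snd ℝ ℝ E) ∂ν)
      (μ, ξ) := by
  have hKd : Differentiable ℝ K := hK.differentiable one_ne_zero
  have hC : 0 ≤ C := (norm_nonneg _).trans (hK' 0)
  refine hasFDerivAt_integral_of_dominated_of_fderiv_le (𝕜 := ℝ) (x₀ := (μ, ξ)) Filter.univ_mem
    (F := fun (q : ℝ × E) y => K (q.1 • y + q.2) * g y)
    (F' := fun q y => g y • (fderiv ℝ K (q.1 • y + q.2)).comp ((fst ℝ ℝ E).smulRight y + snd ℝ ℝ E))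
    (bound := fun y => C * ‖(1 + ‖y‖) * g y‖)
    (Filter.Eventually.of_forall fun q => ?_) hint ?_ (Filter.Eventually.of_forall fun y q _ => ?_)
    (hg₁.norm.const_mul C) (Filter.Eventually.of_forall fun y q _ => ?_)
  · exact (hKd.continuous.comp (by fun_prop)).aestronglyMeasurable.mul hg
  · have hK'_cont := hK.continuous_fderiv one_ne_zero
    exact hg.smul (Continuous.aestronglyMeasurable (by fun_prop))
  · rw [norm_smul, norm_mul, Real.norm_of_nonneg (by positivity : (0 : ℝ) ≤ 1 + ‖y‖)]
    calc _ ≤ ‖g y‖ * (C * (1 + ‖y‖)) := by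
          gcongr
          exact (opNorm_comp_le _ _).trans
            (mul_le_mul (hK' _) (norm_fst_smulRight_add_snd_le y) (norm_nonneg _) hC)
      _ = _ := by ring
  · exact ((hKd _).hasFDerivAt.comp q (hasFDerivAt_smul_add y q)).mul_const (g y)

end DilationTranslation

section Gam

variable {n : ℕ} {γ α p : ℝ}

theorem Gam_zero_left (K : EuclideanSpace ℝ (Fin n) → ℝ) (ξ : EuclideanSpace ℝ (Fin n)) :
    Gam n γ α p K 0 ξ = (1 / (p + 1) * ∫ y, z0 n γ α y ^ (p + 1)) * K ξ := by
  simp only [Gam, zero_smul, zero_add, integral_const_mul]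
  ring

theorem hasFDerivAt_Gam_zero_left (hn : 2 ≤ n) (hγn : γ < (n : ℝ) / 2)
    (hp : p = ((n : ℝ) + 2 * γ) / ((n : ℝ) - 2 * γ)) (hα : 0 < α)
    {K : EuclideanSpace ℝ (Fin n) → ℝ} {C : ℝ} (hK : ContDiff ℝ 1 K)
    (hK' : ∀ x, ‖fderiv ℝ K x‖ ≤ C) (ξ : EuclideanSpace ℝ (Fin n)) :
    HasFDerivAt (fun q : ℝ × EuclideanSpace ℝ (Fin n) => Gam n γ α p K q.1 q.2)
      ((1 / (p + 1)) • ∫ y, z0 n γ α y ^ (p + 1) •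
        (fderiv ℝ K ξ).comp ((fst ℝ ℝ _).smulRight y + snd ℝ ℝ _)) (0, ξ) := by
  have hg := integrable_z0_rpow (by omega) hγn hp hα
  have h := hasFDerivAt_integral_comp_smul_add hK hK' hg.aestronglyMeasurable
    (integrable_one_add_norm_mul_z0_rpow hn hγn hp hα) (μ := 0) (ξ := ξ)
    (by simpa using hg.const_mul (K ξ))
  simp only [zero_smul, zero_add] at h
  exact h.const_mul _

end Gam

theorem stmt3_general (n : ℕ) (hn : 2 ≤ n) (γ : ℝ) (hγn : γ < (n : ℝ) / 2)
    (p : ℝ) (hp : p = ((n : ℝ) + 2 * γ) / ((n : ℝ) - 2 * γ))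
    (α : ℝ) (hα : 0 < α)
    (K : EuclideanSpace ℝ (Fin n) → ℝ) (hK : ContDiff ℝ 1 K)
    (hKgb : ∃ C, ∀ x, ‖gradient K x‖ ≤ C)
    (ξ : EuclideanSpace ℝ (Fin n)) :
    gradient K ξ = 0 ↔
      fderiv ℝ (fun q : ℝ × EuclideanSpace ℝ (Fin n) => Gam n γ α p K q.1 q.2) (0, ξ) = 0 := by
  obtain ⟨C, hC⟩ := hKgb
  have hK' : ∀ x, ‖fderiv ℝ K x‖ ≤ C := fun x => by
    rw [← toDual_gradient, LinearIsometryEquiv.norm_map]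
    exact hC x
  have hΓ := hasFDerivAt_Gam_zero_left hn hγn hp hα hK hK' ξ
  rw [hΓ.fderiv, ← (InnerProductSpace.toDual ℝ _).map_eq_zero_iff, toDual_gradient]
  refine ⟨fun h => by simp [h], fun h => ?_⟩
  set c₀ := 1 / (p + 1) * ∫ y, z0 n γ α y ^ (p + 1)
  have hc₀ : 0 < c₀ := mul_pos (one_div_pos.mpr (exponent_add_one_pos (by omega) hγn hp))
    (integral_z0_rpow_pos (by omega) hγn hp hα)
  have hrestrict := hΓ.comp ξ (hasFDerivAt_prodMk_right (0 : ℝ) ξ)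
  rw [h, zero_comp] at hrestrict
  have hcK : HasFDerivAt (fun ξ' => Gam n γ α p K 0 ξ') (c₀ • fderiv ℝ K ξ) ξ := by
    simp_rw [Gam_zero_left]
    exact ((hK.differentiable one_ne_zero) ξ).hasFDerivAt.const_mul c₀
  exact (smul_eq_zero.mp (hcK.unique hrestrict)).resolve_left hc₀.ne'

/-- The full gradient of `Γ` in the `n+1` variables `(μ, ξ)` vanishes at `(0, ξ)`
iff `∇K(ξ) = 0`; vanishing of the gradient is expressed as vanishing of the
Fréchet derivative of the uncurried function. -/
theorem stmt3 (n : ℕ) (hn : 2 ≤ n) (γ : ℝ) (hγ : 0 < γ) (hγn : γ < (n : ℝ) / 2)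
    (p : ℝ) (hp : p = ((n : ℝ) + 2 * γ) / ((n : ℝ) - 2 * γ))
    (α : ℝ) (hα : 0 < α)
    (K : EuclideanSpace ℝ (Fin n) → ℝ) (hK : ContDiff ℝ 1 K)
    (hKb : ∃ C, ∀ x, |K x| ≤ C)
    (hKgb : ∃ C, ∀ x, ‖gradient K x‖ ≤ C)
    (ξ : EuclideanSpace ℝ (Fin n)) :
    gradient K ξ = 0 ↔
      fderiv ℝ (fun q : ℝ × EuclideanSpace ℝ (Fin n) => Gam n γ α p K q.1 q.2) (0, ξ) = 0 :=
  stmt3_general n hn γ hγn p hp α hα K hK hKgb ξ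
end

section
/- If n ≥ 3 and K : ℝⁿ → ℝ is a bounded C² function with bounded first and second derivatives, then for every ξ ∈ ℝⁿ and every i = 1, …, n, the mixed second partial derivative of Γ satisfies ∂²_{μ ξᵢ}Γ(0, ξ) = 0. -/
/-!
`Γ` is even in `μ`: the substitution `y ↦ -y` leaves `z₀` unchanged. Second Fréchet
derivatives are natural under linear changes of variables, so for the involution
`σ (μ, ξ) = (-μ, ξ)`, which fixes `(0, ξ)` and `(0, eᵢ)` and negates `(1, 0)`, the mixed
derivative `D²Γ(0, ξ) (1, 0) (0, eᵢ)` equals its own negative.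
-/

open MeasureTheory

theorem fderiv_fderiv_apply_of_comp_continuousLinearEquiv_eq {𝕜 E F : Type*}
    [NontriviallyNormedField 𝕜] [NormedAddCommGroup E] [NormedSpace 𝕜 E]
    [NormedAddCommGroup F] [NormedSpace 𝕜 F] (σ : E ≃L[𝕜] E) {f : E → F}
    (hf : f ∘ σ = f) (x u v : E) :
    fderiv 𝕜 (fderiv 𝕜 f) (σ x) (σ u) (σ v) = fderiv 𝕜 (fderiv 𝕜 f) x u v := by
  let T : (E →L[𝕜] F) ≃L[𝕜] (E →L[𝕜] F) := σ.symm.arrowCongr (.refl 𝕜 F)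
  have hDf : fderiv 𝕜 f = T ∘ fderiv 𝕜 f ∘ σ := by
    ext1 q
    conv_lhs => rw [← hf]
    exact σ.comp_right_fderiv
  have hD2f : fderiv 𝕜 (fderiv 𝕜 f) x =
      (T : (E →L[𝕜] F) →L[𝕜] _).comp ((fderiv 𝕜 (fderiv 𝕜 f) (σ x)).comp (σ : E →L[𝕜] E)) := by
    conv_lhs => rw [hDf]
    rw [T.comp_fderiv, σ.comp_right_fderiv]
  rw [hD2f]
  rfl

theorem fderiv_fderiv_apply_zero_of_even {E F : Type*} [NormedAddCommGroup E] [NormedSpace ℝ E]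
    [NormedAddCommGroup F] [NormedSpace ℝ F] {f : ℝ × E → F}
    (hf : ∀ t x, f (-t, x) = f (t, x)) (x v : E) :
    fderiv ℝ (fderiv ℝ f) (0, x) (1, 0) (0, v) = 0 := by
  let σ : (ℝ × E) ≃L[ℝ] (ℝ × E) := (ContinuousLinearEquiv.neg ℝ).prodCongr (.refl ℝ E)
  have h := fderiv_fderiv_apply_of_comp_continuousLinearEquiv_eq σ (funext fun q => hf q.1 q.2)
    (0, x) (1, 0) (0, v)
  have hσ : ∀ q : ℝ × E, σ q = (-q.1, q.2) := fun _ => rfl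
  simp only [hσ, neg_zero] at h
  rw [show ((-1 : ℝ), (0 : E)) = -(1, 0) by simp, map_neg, neg_apply] at h
  have : IsAddTorsionFree F := .of_isTorsionFree ℝ F
  exact neg_eq_self.mp h

theorem Gam_neg (n : ℕ) (γ α p : ℝ) (K : EuclideanSpace ℝ (Fin n) → ℝ)
    (μ : ℝ) (ξ : EuclideanSpace ℝ (Fin n)) :
    Gam n γ α p K (-μ) ξ = Gam n γ α p K μ ξ := by
  have hz : ∀ y, z0 n γ α (-y) = z0 n γ α y := by simp [z0]
  unfold Gam
  rw [← integral_neg_eq_self]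
  simp only [neg_smul, smul_neg, neg_neg, hz]

theorem stmt7_general (n : ℕ) (γ : ℝ)
    (p : ℝ)
    (α : ℝ)
    (K : EuclideanSpace ℝ (Fin n) → ℝ)
    (ξ : EuclideanSpace ℝ (Fin n)) (i : Fin n) :
    fderiv ℝ (fderiv ℝ (fun q : ℝ × EuclideanSpace ℝ (Fin n) => Gam n γ α p K q.1 q.2))
      ((0 : ℝ), ξ) ((1 : ℝ), (0 : EuclideanSpace ℝ (Fin n)))
      ((0 : ℝ), EuclideanSpace.single i (1 : ℝ)) = 0 :=
  fderiv_fderiv_apply_zero_of_even (fun μ ξ => Gam_neg n γ α p K μ ξ) ξ _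

/-- The mixed second partial derivative `∂²_{μ ξᵢ} Γ(0, ξ)` is expressed as the second
Fréchet derivative of the uncurried `Γ` at `(0, ξ)` applied to the directions
`(1, 0)` and `(0, eᵢ)`. -/
theorem stmt7 (n : ℕ) (hn : 3 ≤ n) (γ : ℝ) (hγ : 0 < γ) (hγn : γ < (n : ℝ) / 2)
    (p : ℝ) (hp : p = ((n : ℝ) + 2 * γ) / ((n : ℝ) - 2 * γ))
    (α : ℝ) (hα : 0 < α)
    (K : EuclideanSpace ℝ (Fin n) → ℝ) (hK : ContDiff ℝ 2 K)
    (hKb : ∃ C, ∀ x, |K x| ≤ C)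
    (hK1b : ∃ C, ∀ x, ‖fderiv ℝ K x‖ ≤ C)
    (hK2b : ∃ C, ∀ x, ‖fderiv ℝ (fderiv ℝ K) x‖ ≤ C)
    (ξ : EuclideanSpace ℝ (Fin n)) (i : Fin n) :
    fderiv ℝ (fderiv ℝ (fun q : ℝ × EuclideanSpace ℝ (Fin n) => Gam n γ α p K q.1 q.2))
      ((0 : ℝ), ξ) ((1 : ℝ), (0 : EuclideanSpace ℝ (Fin n)))
      ((0 : ℝ), EuclideanSpace.single i (1 : ℝ)) = 0 :=
  stmt7_general n γ p α K ξ i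
end

section
/- Let γ ∈ (0, n/2) and p = (n+2γ)/(n−2γ). There exists a constant α > 0 such that the function u(x) = α(1+|x|²)^{−(n−2γ)/2} satisfies, for every x ∈ ℝⁿ, u(x) = c_{n,γ} ∫_{ℝⁿ} u(y)^p |x − y|^{−(n−2γ)} dy, where c_{n,γ} = Γ((n−2γ)/2)/(4^γ π^{n/2} Γ(γ)) is the Riesz potential constant. -/
/-!
With `a = (n - 2γ)/2`, the integrand `u(y)^p |x - y|^(2γ-n)` is a multiple of
`(1 + |y|²)^(-(a + 2γ)) |x - y|^(-2a)`. Writing both factors as Gamma integrals,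
`Γ(s) A^(-s) = ∫ u^(s-1) e^(-A u) du` and `Γ(a) B^(-a) = u^a ∫ v^(a-1) e^(-u v B) dv`, turns the
`y`-integral into a Gaussian one (Tonelli); what is left is a Gamma integral in `u` and a Beta
integral in `v`, which give
`∫ (1 + |y|²)^(-(a + 2γ)) |x - y|^(-2a) dy = π^(n/2) Γ(γ) / Γ(a + 2γ) · (1 + |x|²)^(-a)`.
The right choice of `α^(p-1)` cancels this constant against `c_{n,γ}`.
-/

open MeasureTheory Real Set Module

lemma integrableOn_rpow_sub_one_mul_exp_neg_mul_Ioi {b r : ℝ} (hb : 0 < b) (hr : 0 < r) :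
    IntegrableOn (fun t : ℝ => t ^ (b - 1) * exp (-(r * t))) (Ioi 0) := by
  simpa only [rpow_one, neg_mul] using
    integrableOn_rpow_mul_exp_neg_mul_rpow (by linarith : -1 < b - 1) one_pos hr

lemma lintegral_rpow_sub_one_mul_exp_neg_mul_Ioi {b r : ℝ} (hb : 0 < b) (hr : 0 < r) :
    ∫⁻ t in Ioi (0 : ℝ), ENNReal.ofReal (t ^ (b - 1) * exp (-(r * t)))
      = ENNReal.ofReal (Gamma b * r ^ (-b)) := by
  rw [← ofReal_integral_eq_lintegral_ofReal (integrableOn_rpow_sub_one_mul_exp_neg_mul_Ioi hb hr),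
    integral_rpow_mul_exp_neg_mul_Ioi hb hr, one_div, inv_rpow hr.le, ← rpow_neg hr.le, mul_comm]
  filter_upwards [ae_restrict_mem measurableSet_Ioi] with t (ht : 0 < t)
  positivity

lemma lintegral_rpow_sub_one_mul_one_add_mul_rpow_neg_Ioi {b c lam : ℝ} (hb : 0 < b)
    (hbc : b < c) (hlam : 0 < lam) :
    ∫⁻ v in Ioi (0 : ℝ), ENNReal.ofReal (v ^ (b - 1) * (1 + lam * v) ^ (-c))
      = ENNReal.ofReal (Gamma b * Gamma (c - b) / Gamma c * lam ^ (-b)) := by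
  have hc : 0 < c := hb.trans hbc
  have hGc : 0 < Gamma c := Gamma_pos_of_pos hc
  set F : ℝ → ℝ → ℝ := fun v w => v ^ (b - 1) * (w ^ (c - 1) * exp (-((1 + lam * v) * w)))
  have integral_w : ∀ v ∈ Ioi (0 : ℝ), ∫⁻ w in Ioi 0, ENNReal.ofReal (F v w)
      = ENNReal.ofReal (Gamma c) * ENNReal.ofReal (v ^ (b - 1) * (1 + lam * v) ^ (-c)) := by
    intro v (hv : 0 < v)
    simp only [F, ENNReal.ofReal_mul (rpow_nonneg hv.le _)]
    rw [lintegral_const_mul' _ _ ENNReal.ofReal_ne_top,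
      lintegral_rpow_sub_one_mul_exp_neg_mul_Ioi hc (by positivity), ENNReal.ofReal_mul hGc.le]
    ring
  have integral_v : ∀ w ∈ Ioi (0 : ℝ), ∫⁻ v in Ioi 0, ENNReal.ofReal (F v w)
      = ENNReal.ofReal (Gamma b * lam ^ (-b)) *
          ENNReal.ofReal (w ^ (c - b - 1) * exp (-(1 * w))) := by
    intro w (hw : 0 < w)
    have hF : ∀ v, F v w = w ^ (c - 1) * exp (-w) * (v ^ (b - 1) * exp (-(lam * w * v))) := by
      intro v
      simp only [F]
      rw [show -((1 + lam * v) * w) = -w + -(lam * w * v) by ring, exp_add]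
      ring
    simp only [hF, ENNReal.ofReal_mul (by positivity : 0 ≤ w ^ (c - 1) * exp (-w))]
    rw [lintegral_const_mul' _ _ ENNReal.ofReal_ne_top,
      lintegral_rpow_sub_one_mul_exp_neg_mul_Ioi hb (by positivity),
      ← ENNReal.ofReal_mul (by positivity), ← ENNReal.ofReal_mul (by positivity),
      mul_rpow hlam.le hw.le, show c - b - 1 = (c - 1) + -b by ring, rpow_add hw, one_mul]
    ring_nf
  apply (ENNReal.mul_right_inj (ENNReal.ofReal_pos.mpr hGc).ne' ENNReal.ofReal_ne_top).mp
  calc _ = ∫⁻ v in Ioi 0, ∫⁻ w in Ioi 0, ENNReal.ofReal (F v w) := by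
        rw [← lintegral_const_mul' _ _ ENNReal.ofReal_ne_top]
        exact (setLIntegral_congr_fun measurableSet_Ioi integral_w).symm
    _ = ∫⁻ w in Ioi 0, ∫⁻ v in Ioi 0, ENNReal.ofReal (F v w) :=
        lintegral_lintegral_swap (by fun_prop)
    _ = ENNReal.ofReal (Gamma b * lam ^ (-b)) *
          ENNReal.ofReal (Gamma (c - b) * 1 ^ (-(c - b))) := by
        rw [setLIntegral_congr_fun measurableSet_Ioi integral_v,
          lintegral_const_mul' _ _ ENNReal.ofReal_ne_top,
          lintegral_rpow_sub_one_mul_exp_neg_mul_Ioi (sub_pos.mpr hbc) one_pos]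
    _ = _ := by
        rw [← ENNReal.ofReal_mul (by positivity), ← ENNReal.ofReal_mul (by positivity), one_rpow]
        congr 1
        field_simp

lemma lintegral_Ioi_lintegral_Ioi_rpow_mul_exp_neg {s a A B : ℝ} (hs : 0 < s) (ha : 0 < a)
    (hA : 0 < A) (hB : 0 < B) :
    ∫⁻ u in Ioi (0 : ℝ), ∫⁻ v in Ioi (0 : ℝ),
        ENNReal.ofReal (u ^ (s + a - 1) * v ^ (a - 1) * exp (-(u * (A + v * B))))
      = ENNReal.ofReal (Gamma s * Gamma a * (A ^ (-s) * B ^ (-a))) := by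
  have integral_v : ∀ u ∈ Ioi (0 : ℝ), ∫⁻ v in Ioi (0 : ℝ),
      ENNReal.ofReal (u ^ (s + a - 1) * v ^ (a - 1) * exp (-(u * (A + v * B))))
        = ENNReal.ofReal (Gamma a * B ^ (-a)) * ENNReal.ofReal (u ^ (s - 1) * exp (-(A * u))) := by
    intro u (hu : 0 < u)
    have h : ∀ v, u ^ (s + a - 1) * v ^ (a - 1) * exp (-(u * (A + v * B)))
        = u ^ (s + a - 1) * exp (-(A * u)) * (v ^ (a - 1) * exp (-(B * u * v))) := by
      intro v
      rw [show -(u * (A + v * B)) = -(A * u) + -(B * u * v) by ring, exp_add]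
      ring
    simp only [h, ENNReal.ofReal_mul (by positivity : 0 ≤ u ^ (s + a - 1) * exp (-(A * u)))]
    rw [lintegral_const_mul' _ _ ENNReal.ofReal_ne_top,
      lintegral_rpow_sub_one_mul_exp_neg_mul_Ioi ha (by positivity),
      ← ENNReal.ofReal_mul (by positivity), ← ENNReal.ofReal_mul (by positivity),
      mul_rpow hB.le hu.le, show s + a - 1 = (s - 1) + a by ring, rpow_add hu,
      rpow_neg hu.le]
    field_simp
  rw [setLIntegral_congr_fun measurableSet_Ioi integral_v,
    lintegral_const_mul' _ _ ENNReal.ofReal_ne_top,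
    lintegral_rpow_sub_one_mul_exp_neg_mul_Ioi hs hA, ← ENNReal.ofReal_mul (by positivity)]
  ring_nf

lemma lintegral_Ioi_lintegral_Ioi_rpow_mul_exp_neg_div {a m lam : ℝ} (ha : 0 < a) (ham : a < m)
    (hlam : 0 < lam) :
    ∫⁻ u in Ioi (0 : ℝ), ∫⁻ v in Ioi (0 : ℝ), ENNReal.ofReal (v ^ (a - 1) * (1 + v) ^ (-m) *
        (u ^ (m - 1) * exp (-((1 + lam * v) / (1 + v) * u))))
      = ENNReal.ofReal (Gamma a * Gamma (m - a) * lam ^ (-a)) := by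
  have hm : 0 < m := ha.trans ham
  have hGm := Gamma_pos_of_pos hm
  have integral_u : ∀ v ∈ Ioi (0 : ℝ), ∫⁻ u in Ioi (0 : ℝ), ENNReal.ofReal (v ^ (a - 1) *
      (1 + v) ^ (-m) * (u ^ (m - 1) * exp (-((1 + lam * v) / (1 + v) * u))))
        = ENNReal.ofReal (Gamma m) * ENNReal.ofReal (v ^ (a - 1) * (1 + lam * v) ^ (-m)) := by
    intro v (hv : 0 < v)
    have hv1 : 0 < 1 + v := by positivity
    simp only [ENNReal.ofReal_mul (by positivity : 0 ≤ v ^ (a - 1) * (1 + v) ^ (-m))]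
    rw [lintegral_const_mul' _ _ ENNReal.ofReal_ne_top,
      lintegral_rpow_sub_one_mul_exp_neg_mul_Ioi hm (by positivity),
      ← ENNReal.ofReal_mul (by positivity), ← ENNReal.ofReal_mul (by positivity),
      div_rpow (by positivity) hv1.le]
    congr 1
    rw [rpow_neg hv1.le, rpow_neg (by positivity)]
    field_simp
  rw [lintegral_lintegral_swap (by fun_prop), setLIntegral_congr_fun measurableSet_Ioi integral_u,
    lintegral_const_mul' _ _ ENNReal.ofReal_ne_top,
    lintegral_rpow_sub_one_mul_one_add_mul_rpow_neg_Ioi ha ham hlam,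
    ← ENNReal.ofReal_mul hGm.le]
  congr 1
  field_simp

lemma mul_norm_sq_add_mul_norm_sub_sq {E : Type*} [NormedAddCommGroup E] [InnerProductSpace ℝ E]
    {u t : ℝ} (hut : u + t ≠ 0) (x y : E) :
    u * ‖y‖ ^ 2 + t * ‖x - y‖ ^ 2
      = (u + t) * ‖y - (t / (u + t)) • x‖ ^ 2 + u * t / (u + t) * ‖x‖ ^ 2 := by
  rw [norm_sub_sq_real, norm_sub_sq_real, real_inner_smul_right, norm_smul, mul_pow,
    Real.norm_eq_abs, sq_abs, real_inner_comm]
  field_simp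
  ring

lemma lintegral_Ioi_lintegral_Ioi_rpow_mul_exp_neg_norm {E : Type*} [NormedAddCommGroup E]
    {s a : ℝ} (hs : 0 < s) (ha : 0 < a) {x y : E} (hxy : x ≠ y) :
    ∫⁻ u in Ioi (0 : ℝ), ∫⁻ v in Ioi (0 : ℝ), ENNReal.ofReal (u ^ (s + a - 1) * v ^ (a - 1) *
        exp (-(u * (1 + ‖y‖ ^ 2 + v * ‖x - y‖ ^ 2))))
      = ENNReal.ofReal (Gamma s * Gamma a * ((1 + ‖y‖ ^ 2) ^ (-s) * ‖x - y‖ ^ (-(2 * a)))) := by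
  have hnorm : (‖x - y‖ ^ 2) ^ (-a) = ‖x - y‖ ^ (-(2 * a)) := by
    rw [← rpow_natCast, ← rpow_mul (norm_nonneg _)]
    ring_nf
  rw [lintegral_Ioi_lintegral_Ioi_rpow_mul_exp_neg hs ha (by positivity)
    (by have := sub_ne_zero.mpr hxy; positivity), hnorm]

lemma integrable_and_integral_eq_of_lintegral_ofReal_eq {X : Type*} [MeasurableSpace X]
    {μ : Measure X} {f : X → ℝ} {c : ℝ} (hf : AEStronglyMeasurable f μ) (hf₀ : 0 ≤ᵐ[μ] f)
    (hc : 0 ≤ c) (h : ∫⁻ x, ENNReal.ofReal (f x) ∂μ = ENNReal.ofReal c) :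
    Integrable f μ ∧ ∫ x, f x ∂μ = c :=
  ⟨⟨hf, (hasFiniteIntegral_iff_ofReal hf₀).mpr (h ▸ ENNReal.ofReal_lt_top)⟩,
    by rw [integral_eq_lintegral_of_nonneg_ae hf₀ hf, h, ENNReal.toReal_ofReal hc]⟩

section Gaussian

variable {V : Type*} [NormedAddCommGroup V] [InnerProductSpace ℝ V] [FiniteDimensional ℝ V]
  [MeasurableSpace V] [BorelSpace V]

lemma lintegral_exp_neg_mul_norm_sub_sq {c : ℝ} (hc : 0 < c) (z : V) :
    ∫⁻ y : V, ENNReal.ofReal (exp (-(c * ‖y - z‖ ^ 2)))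
      = ENNReal.ofReal ((π / c) ^ ((finrank ℝ V : ℝ) / 2)) := by
  have hI : Integrable fun v : V => exp (-c * ‖v‖ ^ 2) := by
    simpa [Complex.norm_exp, ← Complex.ofReal_pow] using
      (GaussianFourier.integrable_cexp_neg_mul_sq_norm_add (V := V) (b := c)
        (by simpa using hc) 0 0).norm
  rw [lintegral_sub_right_eq_self (fun v => ENNReal.ofReal (exp (-(c * ‖v‖ ^ 2)))) z]
  simp only [← neg_mul]
  rw [← ofReal_integral_eq_lintegral_ofReal hI (.of_forall fun v => (exp_pos _).le),
    GaussianFourier.integral_rexp_neg_mul_sq_norm hc]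

lemma lintegral_exp_neg_mul_norm_sq_add_mul_norm_sub_sq {u t : ℝ} (hut : 0 < u + t) (x : V) :
    ∫⁻ y : V, ENNReal.ofReal (exp (-(u * ‖y‖ ^ 2 + t * ‖x - y‖ ^ 2)))
      = ENNReal.ofReal ((π / (u + t)) ^ ((finrank ℝ V : ℝ) / 2) *
          exp (-(u * t / (u + t) * ‖x‖ ^ 2))) := by
  simp only [mul_norm_sq_add_mul_norm_sub_sq hut.ne', neg_add, exp_add,
    ENNReal.ofReal_mul (exp_pos _).le]
  rw [lintegral_mul_const' _ _ ENNReal.ofReal_ne_top, lintegral_exp_neg_mul_norm_sub_sq hut,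
    ← ENNReal.ofReal_mul (by positivity)]

lemma lintegral_exp_neg_mul_one_add_norm_sq_add_mul_norm_sub_sq {u v : ℝ} (hu : 0 < u)
    (hv : 0 ≤ v) (x : V) :
    ∫⁻ y : V, ENNReal.ofReal (exp (-(u * (1 + ‖y‖ ^ 2 + v * ‖x - y‖ ^ 2))))
      = ENNReal.ofReal (π ^ ((finrank ℝ V : ℝ) / 2) * (1 + v) ^ (-((finrank ℝ V : ℝ) / 2)) *
          u ^ (-((finrank ℝ V : ℝ) / 2)) * exp (-((1 + (1 + ‖x‖ ^ 2) * v) / (1 + v) * u))) := by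
  have hv1 : 0 < 1 + v := by positivity
  have h : ∀ y : V, exp (-(u * (1 + ‖y‖ ^ 2 + v * ‖x - y‖ ^ 2)))
      = exp (-u) * exp (-(u * ‖y‖ ^ 2 + u * v * ‖x - y‖ ^ 2)) := by
    intro y
    rw [← exp_add]
    ring_nf
  simp only [h, ENNReal.ofReal_mul (exp_pos _).le]
  rw [lintegral_const_mul' _ _ ENNReal.ofReal_ne_top,
    lintegral_exp_neg_mul_norm_sq_add_mul_norm_sub_sq (by positivity),
    ← ENNReal.ofReal_mul (by positivity), mul_left_comm, ← exp_add,
    show π / (u + u * v) = π * (1 + v)⁻¹ * u⁻¹ by field_simp,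
    mul_rpow (by positivity) (by positivity), mul_rpow pi_pos.le (by positivity),
    inv_rpow hv1.le, inv_rpow hu.le, ← rpow_neg hv1.le, ← rpow_neg hu.le]
  congr 3
  field_simp
  ring

theorem lintegral_one_add_norm_sq_rpow_neg_mul_norm_sub_rpow_neg {a γ : ℝ} (ha : 0 < a)
    (hγ : 0 < γ) (hV : (finrank ℝ V : ℝ) / 2 = a + γ) (x : V) :
    ∫⁻ y : V, ENNReal.ofReal ((1 + ‖y‖ ^ 2) ^ (-(a + 2 * γ)) * ‖x - y‖ ^ (-(2 * a)))
      = ENNReal.ofReal (π ^ (a + γ) * Gamma γ / Gamma (a + 2 * γ) * (1 + ‖x‖ ^ 2) ^ (-a)) := by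
  have : Nontrivial V :=
    nontrivial_of_finrank_pos (by exact_mod_cast (by linarith : (0 : ℝ) < finrank ℝ V))
  set m := a + γ
  have hs : 0 < a + 2 * γ := by positivity
  have hGs := Gamma_pos_of_pos hs
  have hGa := Gamma_pos_of_pos ha
  set F : V → ℝ → ℝ → ℝ := fun y u v =>
    u ^ (a + 2 * γ + a - 1) * v ^ (a - 1) * exp (-(u * (1 + ‖y‖ ^ 2 + v * ‖x - y‖ ^ 2)))
  have gaussian : ∀ u ∈ Ioi (0 : ℝ), ∀ v ∈ Ioi (0 : ℝ), ∫⁻ y, ENNReal.ofReal (F y u v)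
      = ENNReal.ofReal (π ^ m) * ENNReal.ofReal (v ^ (a - 1) * (1 + v) ^ (-m) *
          (u ^ (m - 1) * exp (-((1 + (1 + ‖x‖ ^ 2) * v) / (1 + v) * u)))) := by
    intro u (hu : 0 < u) v (hv : 0 < v)
    simp only [F, ENNReal.ofReal_mul (by positivity : 0 ≤ u ^ (a + 2 * γ + a - 1) * v ^ (a - 1))]
    rw [lintegral_const_mul' _ _ ENNReal.ofReal_ne_top,
      lintegral_exp_neg_mul_one_add_norm_sq_add_mul_norm_sub_sq hu hv.le, hV,
      ← ENNReal.ofReal_mul (by positivity), ← ENNReal.ofReal_mul (by positivity),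
      show a + 2 * γ + a - 1 = (m - 1) + m by ring, rpow_add hu, rpow_neg hu.le]
    congr 1
    field_simp
  apply (ENNReal.mul_right_inj (ENNReal.ofReal_pos.mpr (mul_pos hGs hGa)).ne'
    ENNReal.ofReal_ne_top).mp
  calc _ = ∫⁻ y, ∫⁻ u in Ioi (0 : ℝ), ∫⁻ v in Ioi (0 : ℝ), ENNReal.ofReal (F y u v) := by
        rw [← lintegral_const_mul' _ _ ENNReal.ofReal_ne_top]
        refine lintegral_congr_ae ?_
        filter_upwards [Measure.ae_ne volume x] with y hy
        rw [← ENNReal.ofReal_mul (by positivity),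
          lintegral_Ioi_lintegral_Ioi_rpow_mul_exp_neg_norm hs ha hy.symm]
    _ = ∫⁻ u in Ioi (0 : ℝ), ∫⁻ v in Ioi (0 : ℝ), ∫⁻ y, ENNReal.ofReal (F y u v) := by
        rw [lintegral_lintegral_swap (by fun_prop)]
        refine setLIntegral_congr_fun measurableSet_Ioi fun u _ => ?_
        exact lintegral_lintegral_swap (by fun_prop)
    _ = ENNReal.ofReal (π ^ m) * ENNReal.ofReal (Gamma a * Gamma γ * (1 + ‖x‖ ^ 2) ^ (-a)) := by
        rw [← show m - a = γ by ring,
          ← lintegral_Ioi_lintegral_Ioi_rpow_mul_exp_neg_div ha (by linarith) (by positivity),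
          ← lintegral_const_mul' _ _ ENNReal.ofReal_ne_top]
        refine setLIntegral_congr_fun measurableSet_Ioi fun u hu => ?_
        rw [← lintegral_const_mul' _ _ ENNReal.ofReal_ne_top]
        exact setLIntegral_congr_fun measurableSet_Ioi (gaussian u hu)
    _ = _ := by
        rw [← ENNReal.ofReal_mul (by positivity), ← ENNReal.ofReal_mul (by positivity)]
        congr 1
        field_simp

theorem integrable_one_add_norm_sq_rpow_neg_mul_norm_sub_rpow_neg {a γ : ℝ} (ha : 0 < a)
    (hγ : 0 < γ) (hV : (finrank ℝ V : ℝ) / 2 = a + γ) (x : V) :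
    Integrable (fun y : V => (1 + ‖y‖ ^ 2) ^ (-(a + 2 * γ)) * ‖x - y‖ ^ (-(2 * a))) ∧
      ∫ y : V, (1 + ‖y‖ ^ 2) ^ (-(a + 2 * γ)) * ‖x - y‖ ^ (-(2 * a))
        = π ^ (a + γ) * Gamma γ / Gamma (a + 2 * γ) * (1 + ‖x‖ ^ 2) ^ (-a) :=
  integrable_and_integral_eq_of_lintegral_ofReal_eq (by fun_prop)
    (.of_forall fun _ => by positivity) (by positivity)
    (lintegral_one_add_norm_sq_rpow_neg_mul_norm_sub_rpow_neg ha hγ hV x)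

end Gaussian

theorem stmt18_general (n : ℕ) (γ : ℝ) (hγ : 0 < γ) (hγn : γ < (n : ℝ) / 2)
    (p : ℝ) (hp : p = ((n : ℝ) + 2 * γ) / ((n : ℝ) - 2 * γ)) :
    ∃ α : ℝ, 0 < α ∧
      ∀ x : EuclideanSpace ℝ (Fin n),
        Integrable (fun y : EuclideanSpace ℝ (Fin n) =>
          (α * (1 + ‖y‖ ^ 2) ^ (-(((n : ℝ) - 2 * γ) / 2))) ^ p *
            ‖x - y‖ ^ (-((n : ℝ) - 2 * γ))) ∧
        α * (1 + ‖x‖ ^ 2) ^ (-(((n : ℝ) - 2 * γ) / 2)) =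
          (Real.Gamma (((n : ℝ) - 2 * γ) / 2) /
              ((4 : ℝ) ^ γ * Real.pi ^ ((n : ℝ) / 2) * Real.Gamma γ)) *
            ∫ y : EuclideanSpace ℝ (Fin n),
              (α * (1 + ‖y‖ ^ 2) ^ (-(((n : ℝ) - 2 * γ) / 2))) ^ p *
                ‖x - y‖ ^ (-((n : ℝ) - 2 * γ)) := by
  set a := ((n : ℝ) - 2 * γ) / 2 with ha_def
  have ha : 0 < a := by rw [ha_def]; linarith
  have hn : (finrank ℝ (EuclideanSpace ℝ (Fin n)) : ℝ) / 2 = a + γ := by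
    rw [finrank_euclideanSpace_fin]
    ring
  have hap : a * p = a + 2 * γ := by
    rw [hp, ha_def]
    field_simp [show (n : ℝ) - 2 * γ ≠ 0 by linarith]
    ring
  obtain ⟨α, hα, hαp⟩ : ∃ α : ℝ, 0 < α ∧ α ^ (p - 1) = 4 ^ γ * Gamma (a + 2 * γ) / Gamma a :=
    ⟨_, by positivity, rpow_inv_rpow (by positivity) (by nlinarith : 0 < p - 1).ne'⟩
  refine ⟨α, hα, fun x => ?_⟩
  have hbubble : ∀ y : EuclideanSpace ℝ (Fin n), (α * (1 + ‖y‖ ^ 2) ^ (-a)) ^ p *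
      ‖x - y‖ ^ (-((n : ℝ) - 2 * γ))
        = α ^ p * ((1 + ‖y‖ ^ 2) ^ (-(a + 2 * γ)) * ‖x - y‖ ^ (-(2 * a))) := by
    intro y
    rw [mul_rpow hα.le (by positivity), ← rpow_mul (by positivity), neg_mul, hap,
      show (n : ℝ) - 2 * γ = 2 * a by ring]
    ring
  obtain ⟨hint, hval⟩ := integrable_one_add_norm_sq_rpow_neg_mul_norm_sub_rpow_neg ha hγ hn x
  simp only [hbubble]
  refine ⟨hint.const_mul _, ?_⟩
  rw [integral_const_mul, hval, ← hn, finrank_euclideanSpace_fin, show p = (p - 1) + 1 by ring,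
    rpow_add hα, hαp, rpow_one]
  have := Gamma_pos_of_pos ha
  field_simp

theorem stmt18 (n : ℕ) (hn : 1 ≤ n) (γ : ℝ) (hγ : 0 < γ) (hγn : γ < (n : ℝ) / 2)
    (p : ℝ) (hp : p = ((n : ℝ) + 2 * γ) / ((n : ℝ) - 2 * γ)) :
    ∃ α : ℝ, 0 < α ∧
      ∀ x : EuclideanSpace ℝ (Fin n),
        Integrable (fun y : EuclideanSpace ℝ (Fin n) =>
          (α * (1 + ‖y‖ ^ 2) ^ (-(((n : ℝ) - 2 * γ) / 2))) ^ p *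
            ‖x - y‖ ^ (-((n : ℝ) - 2 * γ))) ∧
        α * (1 + ‖x‖ ^ 2) ^ (-(((n : ℝ) - 2 * γ) / 2)) =
          (Real.Gamma (((n : ℝ) - 2 * γ) / 2) /
              ((4 : ℝ) ^ γ * Real.pi ^ ((n : ℝ) / 2) * Real.Gamma γ)) *
            ∫ y : EuclideanSpace ℝ (Fin n),
              (α * (1 + ‖y‖ ^ 2) ^ (-(((n : ℝ) - 2 * γ) / 2))) ^ p *
                ‖x - y‖ ^ (-((n : ℝ) - 2 * γ)) :=
  stmt18_general n γ hγ hγn p hp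
end
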